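/- arXiv:1302.1654 — 7 statements merged into one kernel-verified Lean document; each statement's English description precedes it below -/
import Mathlib

section
/- Let P be a polyhedron in ℝⁿ and F a nonempty face of P with dim F = k. Let B be a nonempty convex subset of ∂F, where ∂F is the union of all proper faces of F. Then there exists a face G of F with dim G = k − 1 such that B ⊆ G. -/
open scoped RealInnerProductSpace

noncomputable section

/-- A polyhedron in `ℝⁿ` is a finite intersection of closed half-spaces. -/
def IsPolyhedron {n : ℕ} (P : Set (EuclideanSpace ℝ (Fin n))) : Prop :=
  ∃ (N : ℕ) (q : Fin N → EuclideanSpace ℝ (Fin n)) (r : Fin N → ℝ),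
    P = {y | ∀ j, r j ≤ ⟪q j, y⟫}

/-- A subset `F ⊆ P` is a face of `P` if there are `q ∈ ℝⁿ` and `ρ ∈ ℝ` with
`⟨q, u⟩ = ρ` for every `u ∈ F` and `ρ < ⟨q, y⟩` for every `y ∈ P \ F`. -/
def IsFace {n : ℕ} (P F : Set (EuclideanSpace ℝ (Fin n))) : Prop :=
  F ⊆ P ∧ ∃ (q : EuclideanSpace ℝ (Fin n)) (ρ : ℝ),
    (∀ u ∈ F, ⟪q, u⟫ = ρ) ∧ ∀ y ∈ P \ F, ρ < ⟪q, y⟫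

/-- The direction space `V(A) = span {x - y : x, y ∈ A}` of a set `A ⊆ ℝⁿ`. -/
def dirSpan {n : ℕ} (A : Set (EuclideanSpace ℝ (Fin n))) :
    Submodule ℝ (EuclideanSpace ℝ (Fin n)) :=
  Submodule.span ℝ {v | ∃ x ∈ A, ∃ y ∈ A, v = x - y}

lemma eps_lemma {ι : Type*} [Finite ι] (A B c : ι → ℝ) (h1 : ∀ j, c j ≤ A j)
    (h2 : ∀ j, A j = c j → 0 ≤ B j) :
    ∃ ε > 0, ∀ j, c j ≤ A j + ε * B j := by
  have hev : ∀ᶠ ε in nhdsWithin (0:ℝ) (Set.Ioi 0), ∀ j, c j ≤ A j + ε * B j := by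
    rw [Filter.eventually_all]
    intro j
    rcases eq_or_lt_of_le (h1 j) with he | hl
    · filter_upwards [self_mem_nhdsWithin] with ε hε
      have : (0:ℝ) ≤ ε * B j := mul_nonneg (le_of_lt hε) (h2 j he.symm)
      linarith
    · have hc : Filter.Tendsto (fun ε : ℝ => A j + ε * B j) (nhdsWithin 0 (Set.Ioi 0))
          (nhds (A j + 0 * B j)) := by
        apply Filter.Tendsto.mono_left _ nhdsWithin_le_nhds
        exact (Continuous.tendsto (by continuity) 0)
      simp only [zero_mul, add_zero] at hc
      exact (hc.eventually (eventually_gt_nhds hl)).mono fun ε h => le_of_lt h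
  obtain ⟨ε, hε1, hε2⟩ := (hev.and self_mem_nhdsWithin).exists
  exact ⟨ε, hε2, hε1⟩

lemma tight_on {n : ℕ} {Bs : Set (EuclideanSpace ℝ (Fin n))} {b x : EuclideanSpace ℝ (Fin n)}
    (hb : b ∈ intrinsicInterior ℝ Bs) (hx : x ∈ Bs)
    (q : EuclideanSpace ℝ (Fin n)) (ρ : ℝ) (hge : ∀ y ∈ Bs, ρ ≤ ⟪q, y⟫)
    (hbq : ⟪q, b⟫ = ρ) : ⟪q, x⟫ = ρ := by
  obtain ⟨b', hb', hcoe⟩ := mem_intrinsicInterior.mp hb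
  have hbB : b ∈ Bs := intrinsicInterior_subset hb
  have hxs : x ∈ affineSpan ℝ Bs := subset_affineSpan ℝ _ hx
  have hbs : b ∈ affineSpan ℝ Bs := subset_affineSpan ℝ _ hbB
  have hmem : ∀ t : ℝ, x + t • (b - x) ∈ affineSpan ℝ Bs := by
    intro t
    have := (affineSpan ℝ Bs).smul_vsub_vadd_mem t hbs hxs hxs
    simpa [vsub_eq_sub, vadd_eq_add, add_comm] using this
  set m : ℝ → ↥(affineSpan ℝ Bs) := fun t => ⟨x + t • (b - x), hmem t⟩ with hm
  have hmc : Continuous m := by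
    apply Continuous.subtype_mk
    continuity
  have hm1 : m 1 = b' := by
    apply Subtype.ext
    rw [hcoe]
    simp [hm]
  have hnb : m ⁻¹' (interior ((↑) ⁻¹' Bs : Set <| affineSpan ℝ Bs)) ∈ nhds (1:ℝ) := by
    apply hmc.continuousAt.preimage_mem_nhds
    rw [hm1]
    exact isOpen_interior.mem_nhds hb'
  obtain ⟨l, u, hlu, hsub⟩ := mem_nhds_iff_exists_Ioo_subset.mp hnb
  set t : ℝ := (1 + u) / 2 with ht
  have htu : t ∈ Set.Ioo l u := by
    constructor <;> [skip; skip] <;> (simp only [ht]; cases' hlu with h1 h2; nlinarith)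
  have ht1 : 1 < t := by cases' hlu with h1 h2; simp only [ht]; nlinarith
  have hy : x + t • (b - x) ∈ Bs := by
    have := interior_subset (hsub htu)
    exact this
  have hgy := hge _ hy
  have hgx := hge _ hx
  have hexp : ⟪q, x + t • (b - x)⟫ = ⟪q, x⟫ + t * (ρ - ⟪q, x⟫) := by
    rw [inner_add_right, real_inner_smul_right, inner_sub_right, hbq]
  rw [hexp] at hgy
  nlinarith

lemma diff_mem_dirSpan {n : ℕ} {A : Set (EuclideanSpace ℝ (Fin n))}
    {x y : EuclideanSpace ℝ (Fin n)} (hx : x ∈ A) (hy : y ∈ A) : x - y ∈ dirSpan A :=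
  Submodule.subset_span ⟨x, hx, y, hy, rfl⟩

/-- If `P` is a polyhedron, `F` a nonempty face of `P` of dimension `k`, and `B` a nonempty
convex subset of the boundary `∂F` (the union of all proper faces of `F`), then `B` is
contained in a `(k-1)`-dimensional face of `F`. -/
theorem stmt2 {n : ℕ} (P F B : Set (EuclideanSpace ℝ (Fin n))) (k : ℕ)
    (hP : IsPolyhedron P) (hF : IsFace P F) (hFne : F.Nonempty)
    (hdim : Module.finrank ℝ ↥(dirSpan F) = k)
    (hBne : B.Nonempty) (hBconv : Convex ℝ B)
    (hB : B ⊆ ⋃₀ {G | IsFace F G ∧ G ≠ F}) :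
    ∃ G, IsFace F G ∧ Module.finrank ℝ ↥(dirSpan G) = k - 1 ∧ B ⊆ G := by
  classical
  obtain ⟨N, q, r, hPdef⟩ := hP
  obtain ⟨hFP, q₀, ρ₀, hq₀eq, hq₀lt⟩ := hF
  obtain ⟨M, a, c, hrep⟩ : ∃ (M : ℕ) (a : Fin M → EuclideanSpace ℝ (Fin n)) (c : Fin M → ℝ),
      ∀ y, y ∈ F ↔ ∀ j, c j ≤ ⟪a j, y⟫ := by
    refine ⟨N + 2, Fin.cons q₀ (Fin.cons (-q₀) q), Fin.cons ρ₀ (Fin.cons (-ρ₀) r), fun y => ?_⟩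
    constructor
    · intro hy
      have hyP : y ∈ P := hFP hy
      have hyq : ⟪q₀, y⟫ = ρ₀ := hq₀eq y hy
      intro j
      refine Fin.cases ?_ (fun i => ?_) j
      · simp [hyq]
      · refine Fin.cases ?_ (fun i' => ?_) i
        · simp [inner_neg_left, hyq]
        · simp only [Fin.cons_succ]
          have : y ∈ {y | ∀ j, r j ≤ ⟪q j, y⟫} := hPdef ▸ hyP
          exact this i'
    · intro h
      have hyP : y ∈ P := by
        rw [hPdef]
        intro j
        have := h j.succ.succ
        simpa only [Fin.cons_succ] using this
      have h0 := h 0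
      have h1 := h (Fin.succ 0)
      simp only [Fin.cons_zero, Fin.cons_succ, inner_neg_left, neg_le_neg_iff] at h0 h1
      have hyq : ⟪q₀, y⟫ = ρ₀ := le_antisymm h1 h0
      by_contra hyF
      have := hq₀lt y ⟨hyP, hyF⟩
      linarith
  set Ieq : Set (Fin M) := {j | ∀ y ∈ F, ⟪a j, y⟫ = c j} with hIeqdef
  -- relative interior point z
  obtain ⟨z, hzF, hz⟩ : ∃ z ∈ F, ∀ j, j ∉ Ieq → c j < ⟪a j, z⟫ := by
    have hy : ∀ j : Fin M, ∃ y ∈ F, (j ∉ Ieq → c j < ⟪a j, y⟫) := by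
      intro j
      by_cases hj : j ∈ Ieq
      · exact ⟨hFne.choose, hFne.choose_spec, fun h => absurd hj h⟩
      · have hj' : ¬ ∀ y ∈ F, ⟪a j, y⟫ = c j := hj
        push_neg at hj'
        obtain ⟨y, hyF, hyne⟩ := hj'
        exact ⟨y, hyF, fun _ => lt_of_le_of_ne ((hrep y).mp hyF j) (Ne.symm hyne)⟩
    choose w hwF hw using hy
    rcases Nat.eq_zero_or_pos M with hM | hM
    · exact ⟨hFne.choose, hFne.choose_spec, fun j => by subst hM; exact j.elim0⟩
    have hMpos : (0:ℝ) < M := Nat.cast_pos.mpr hM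
    refine ⟨(M:ℝ)⁻¹ • ∑ j, w j, ?_, ?_⟩
    case _ =>
      rw [hrep]
      intro i
      have hs : (M:ℝ) * c i ≤ ∑ j, ⟪a i, w j⟫ := by
        calc (M:ℝ) * c i = ∑ _j : Fin M, c i := by
              simp [Finset.sum_const, Finset.card_univ, mul_comm]
        _ ≤ _ := Finset.sum_le_sum fun j _ => (hrep (w j)).mp (hwF j) i
      have h2 := mul_le_mul_of_nonneg_left hs (le_of_lt (inv_pos.mpr hMpos))
      rw [real_inner_smul_right, inner_sum]
      calc c i = (M:ℝ)⁻¹ * ((M:ℝ) * c i) := by field_simp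
      _ ≤ _ := h2
    case _ =>
      intro i hiI
      have hs : (M:ℝ) * c i < ∑ j, ⟪a i, w j⟫ := by
        have heq : (M:ℝ) * c i = ∑ _j : Fin M, c i := by
          simp [Finset.sum_const, Finset.card_univ, mul_comm]
        rw [heq]
        refine Finset.sum_lt_sum (fun j _ => (hrep (w j)).mp (hwF j) i) ?_
        exact ⟨i, Finset.mem_univ i, hw i hiI⟩
      have h2 := mul_lt_mul_of_pos_left hs (inv_pos.mpr hMpos)
      rw [real_inner_smul_right, inner_sum]
      calc c i = (M:ℝ)⁻¹ * ((M:ℝ) * c i) := by field_simp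
      _ < _ := h2
  -- the direction space of F
  set W : Submodule ℝ (EuclideanSpace ℝ (Fin n)) :=
    { carrier := {v | ∀ j ∈ Ieq, ⟪a j, v⟫ = 0}
      add_mem' := fun hx hy j hj => by
        rw [inner_add_right, hx j hj, hy j hj, add_zero]
      zero_mem' := fun j hj => inner_zero_right _
      smul_mem' := fun r x hx j hj => by
        rw [real_inner_smul_right, hx j hj, mul_zero] } with hWdef
  have hWmem : ∀ v, v ∈ W ↔ ∀ j ∈ Ieq, ⟪a j, v⟫ = 0 := fun v => Iff.rfl
  have hWF : dirSpan F = W := by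
    apply le_antisymm
    · rw [dirSpan, Submodule.span_le]
      rintro v ⟨x, hx, y, hy, rfl⟩
      rw [SetLike.mem_coe, hWmem]
      intro j hj
      have hjx : ⟪a j, x⟫ = c j := hj x hx
      have hjy : ⟪a j, y⟫ = c j := hj y hy
      rw [inner_sub_right, hjx, hjy, sub_self]
    · intro v hv
      rw [hWmem] at hv
      obtain ⟨ε, hε, hεv⟩ := eps_lemma (fun j => ⟪a j, z⟫) (fun j => ⟪a j, v⟫) c
        (fun j => (hrep z).mp hzF j)
        (fun j hj => by
          beta_reduce
          by_cases h : j ∈ Ieq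
          · rw [hv j h]
          · exact absurd hj (ne_of_gt (hz j h)))
      have hz' : z + ε • v ∈ F := by
        rw [hrep]
        intro j
        rw [inner_add_right, real_inner_smul_right]
        exact hεv j
      have hveq : v = ε⁻¹ • ((z + ε • v) - z) := by
        rw [add_sub_cancel_left, smul_smul, inv_mul_cancel₀ (ne_of_gt hε), one_smul]
      rw [hveq]
      exact Submodule.smul_mem _ _ (diff_mem_dirSpan hz' hzF)
  -- B lies in F; interior point b of B
  have hBF : B ⊆ F := fun x hx => by
    obtain ⟨G, ⟨hGF, _⟩, hxG⟩ := hB hx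
    exact hGF.1 hxG
  obtain ⟨b, hbI⟩ := hBne.intrinsicInterior hBconv
  have hbB : b ∈ B := intrinsicInterior_subset hbI
  obtain ⟨G₀, ⟨hG₀F, hG₀ne⟩, hbG₀⟩ := hB hbB
  obtain ⟨hG₀sub, ℓ, ρ', hℓeq, hℓlt⟩ := hG₀F
  have hℓge : ∀ y ∈ F, ρ' ≤ ⟪ℓ, y⟫ := by
    intro y hy
    by_cases h : y ∈ G₀
    · exact (hℓeq y h).ge
    · exact (hℓlt y ⟨hy, h⟩).le
  have hℓb : ⟪ℓ, b⟫ = ρ' := hℓeq b hbG₀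
  have hbF : b ∈ F := hG₀sub hbG₀
  obtain ⟨y₀, hy₀F, hy₀⟩ : ∃ y₀ ∈ F, ρ' < ⟪ℓ, y₀⟫ := by
    have hns : ¬ F ⊆ G₀ := fun h => hG₀ne (Set.Subset.antisymm hG₀sub h)
    obtain ⟨y₀, hy₀F, hy₀G⟩ := Set.not_subset.mp hns
    exact ⟨y₀, hy₀F, hℓlt y₀ ⟨hy₀F, hy₀G⟩⟩
  -- minimal representation
  have hSex : ∃ m : ℕ, ∃ S : Finset (Fin M), S.card = m ∧
      ∀ y, y ∈ F ↔ ∀ j ∈ S, c j ≤ ⟪a j, y⟫ :=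
    ⟨(Finset.univ : Finset (Fin M)).card, Finset.univ, rfl, fun y => by
      rw [hrep]; simp⟩
  obtain ⟨S, hScard, hSrep⟩ := Nat.find_spec hSex
  -- an active non-implicit constraint at b
  obtain ⟨j', hj'S, hj'I, hj'b⟩ : ∃ j ∈ S, j ∉ Ieq ∧ ⟪a j, b⟫ = c j := by
    by_contra hcon
    push_neg at hcon
    obtain ⟨ε, hε, hεv⟩ := eps_lemma (ι := {j // j ∈ S}) (fun j => ⟪a (j:Fin M), b⟫)
      (fun j => ⟪a (j:Fin M), b - y₀⟫) (fun j => c (j:Fin M))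
      (fun j => (hrep b).mp hbF j)
      (fun j hj => by
        beta_reduce
        by_cases hI : (j:Fin M) ∈ Ieq
        · have hIb : ⟪a (j:Fin M), b⟫ = c (j:Fin M) := hI b hbF
          have hIy : ⟪a (j:Fin M), y₀⟫ = c (j:Fin M) := hI y₀ hy₀F
          rw [inner_sub_right, hIb, hIy, sub_self]
        · exact absurd hj (hcon j j.2 hI))
    have hbF' : b + ε • (b - y₀) ∈ F := by
      rw [hSrep]
      intro j hjS
      have := hεv ⟨j, hjS⟩
      rw [inner_add_right, real_inner_smul_right]
      exact this
    have hge := hℓge _ hbF'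
    rw [inner_add_right, real_inner_smul_right, inner_sub_right, hℓb] at hge
    nlinarith
  -- irredundancy of j'
  obtain ⟨u, hu1, hu2⟩ : ∃ u, (∀ i ∈ S, i ≠ j' → c i ≤ ⟪a i, u⟫) ∧ ⟪a j', u⟫ < c j' := by
    by_contra hcon
    push_neg at hcon
    have hrep' : ∃ S' : Finset (Fin M), S'.card = (S.erase j').card ∧
        ∀ y, y ∈ F ↔ ∀ j ∈ S', c j ≤ ⟪a j, y⟫ := by
      refine ⟨S.erase j', rfl, fun y => ?_⟩
      constructor
      · intro hy j hj
        exact (hSrep y).mp hy j (Finset.mem_of_mem_erase hj)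
      · intro h
        rw [hSrep]
        intro j hjS
        by_cases hjj : j = j'
        · subst hjj
          exact hcon y (fun i hi hne => h i (Finset.mem_erase.mpr ⟨hne, hi⟩))
        · exact h j (Finset.mem_erase.mpr ⟨hjj, hjS⟩)
    have hlt : (S.erase j').card < Nat.find hSex := by
      calc (S.erase j').card < S.card := Finset.card_erase_lt_of_mem hj'S
      _ = Nat.find hSex := hScard
    exact Nat.find_min hSex hlt hrep'
  -- the point g on the facet
  have hzj' : c j' < ⟪a j', z⟫ := hz j' hj'I
  set t : ℝ := (⟪a j', z⟫ - c j') / (⟪a j', z⟫ - ⟪a j', u⟫) with htdef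
  have hden : 0 < ⟪a j', z⟫ - ⟪a j', u⟫ := by linarith
  have ht0 : 0 < t := div_pos (by linarith) hden
  have ht1 : t < 1 := by rw [htdef, div_lt_one hden]; linarith
  set g := z + t • (u - z) with hgdef
  have hgexp : ∀ i, ⟪a i, g⟫ = ⟪a i, z⟫ + t * (⟪a i, u⟫ - ⟪a i, z⟫) := by
    intro i
    rw [hgdef, inner_add_right, real_inner_smul_right, inner_sub_right]
  have hgj' : ⟪a j', g⟫ = c j' := by
    rw [hgexp j', htdef]
    have hne : ⟪a j', z⟫ - ⟪a j', u⟫ ≠ 0 := ne_of_gt hden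
    generalize ⟪a j', z⟫ = Z at *
    generalize ⟪a j', u⟫ = U at *
    field_simp
    ring
  have hgS : ∀ i ∈ S, i ≠ j' → c i ≤ ⟪a i, g⟫ ∧ (i ∉ Ieq → c i < ⟪a i, g⟫) := by
    intro i hiS hne
    have h1 : c i ≤ ⟪a i, z⟫ := (hrep z).mp hzF i
    have h2 : c i ≤ ⟪a i, u⟫ := hu1 i hiS hne
    constructor
    · rw [hgexp i]; nlinarith
    · intro hiI
      have h3 := hz i hiI
      rw [hgexp i]; nlinarith
  have hgF : g ∈ F := by
    rw [hSrep]
    intro i hiS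
    by_cases hii : i = j'
    · subst hii; exact hgj'.ge
    · exact (hgS i hiS hii).1
  -- the facet G
  refine ⟨F ∩ {y | ⟪a j', y⟫ = c j'}, ?_, ?_, ?_⟩
  · refine ⟨Set.inter_subset_left, a j', c j', fun v hv => hv.2, fun y hy => ?_⟩
    have h1 : c j' ≤ ⟪a j', y⟫ := (hrep y).mp hy.1 j'
    exact lt_of_le_of_ne h1 fun h => hy.2 ⟨hy.1, h.symm⟩
  · -- dimension
    set f : EuclideanSpace ℝ (Fin n) →ₗ[ℝ] ℝ :=
      { toFun := fun v => ⟪a j', v⟫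
        map_add' := fun x y => inner_add_right _ _ _
        map_smul' := fun r x => by
          show ⟪a j', r • x⟫ = r • ⟪a j', x⟫
          rw [smul_eq_mul]
          exact real_inner_smul_right _ _ _ } with hfdef
    set φ : ↥W →ₗ[ℝ] ℝ := f.comp W.subtype with hφdef
    have hGdir : dirSpan (F ∩ {y | ⟪a j', y⟫ = c j'}) =
        Submodule.map W.subtype (LinearMap.ker φ) := by
      apply le_antisymm
      · rw [dirSpan, Submodule.span_le]
        rintro v ⟨x, hx, y, hy, rfl⟩
        have hWxy : x - y ∈ W := hWF ▸ diff_mem_dirSpan hx.1 hy.1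
        refine Submodule.mem_map.mpr ⟨⟨x - y, hWxy⟩, ?_, rfl⟩
        rw [LinearMap.mem_ker]
        show f (x - y) = 0
        show ⟪a j', x - y⟫ = 0
        rw [inner_sub_right, hx.2, hy.2, sub_self]
      · rintro v hv
        obtain ⟨wv, hwker, rfl⟩ := Submodule.mem_map.mp hv
        have hvW : (wv : EuclideanSpace ℝ (Fin n)) ∈ W := wv.2
        have hfv : ⟪a j', (wv : EuclideanSpace ℝ (Fin n))⟫ = 0 := hwker
        obtain ⟨ε, hε, hεv⟩ := eps_lemma (ι := {j // j ∈ S}) (fun j => ⟪a (j:Fin M), g⟫)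
          (fun j => ⟪a (j:Fin M), (wv : EuclideanSpace ℝ (Fin n))⟫) (fun j => c (j:Fin M))
          (fun j => (hrep g).mp hgF j)
          (fun j hj => by
            beta_reduce
            by_cases hjj : (j:Fin M) = j'
            · rw [hjj, hfv]
            · by_cases hI : (j:Fin M) ∈ Ieq
              · rw [(hWmem _).mp hvW _ hI]
              · exact absurd hj (ne_of_gt ((hgS j j.2 hjj).2 hI)))
        have hg' : g + ε • (wv : EuclideanSpace ℝ (Fin n)) ∈ F ∩ {y | ⟪a j', y⟫ = c j'} := by
          constructor
          · rw [hSrep]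
            intro i hiS
            have := hεv ⟨i, hiS⟩
            rw [inner_add_right, real_inner_smul_right]
            exact this
          · show ⟪a j', g + ε • (wv : EuclideanSpace ℝ (Fin n))⟫ = c j'
            rw [inner_add_right, real_inner_smul_right, hfv, mul_zero, add_zero, hgj']
        have hgG : g ∈ F ∩ {y | ⟪a j', y⟫ = c j'} := ⟨hgF, hgj'⟩
        have hveq : (wv : EuclideanSpace ℝ (Fin n)) =
            ε⁻¹ • ((g + ε • (wv : EuclideanSpace ℝ (Fin n))) - g) := by
          rw [add_sub_cancel_left, smul_smul, inv_mul_cancel₀ (ne_of_gt hε), one_smul]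
        show (wv : EuclideanSpace ℝ (Fin n)) ∈ dirSpan (F ∩ {y | ⟪a j', y⟫ = c j'})
        rw [hveq]
        exact Submodule.smul_mem _ _ (diff_mem_dirSpan hg' hgG)
    have hφsurj : LinearMap.range φ = ⊤ := by
      obtain ⟨y', hy'F, hy'ne⟩ : ∃ y' ∈ F, ⟪a j', y'⟫ ≠ c j' := by
        have hni : ¬ ∀ y ∈ F, ⟪a j', y⟫ = c j' := hj'I
        push_neg at hni
        exact hni
      have hwW : y' - g ∈ W := hWF ▸ diff_mem_dirSpan hy'F hgF
      have hφne : φ ⟨y' - g, hwW⟩ ≠ 0 := by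
        show ⟪a j', y' - g⟫ ≠ 0
        rw [inner_sub_right, hgj']
        exact sub_ne_zero.mpr hy'ne
      rw [LinearMap.range_eq_top]
      intro x
      refine ⟨(x / φ ⟨y' - g, hwW⟩) • ⟨y' - g, hwW⟩, ?_⟩
      rw [map_smul, smul_eq_mul, div_mul_cancel₀ _ hφne]
    have hrank := LinearMap.finrank_range_add_finrank_ker φ
    rw [hφsurj, finrank_top, Module.finrank_self] at hrank
    rw [hWF] at hdim
    rw [hGdir, Submodule.finrank_map_subtype_eq]
    omega
  · intro x hxB
    refine ⟨hBF hxB, ?_⟩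
    exact tight_on hbI hxB (a j') (c j') (fun y hy => (hrep y).mp (hBF hy) j') hj'b
end
end

section
/- Let P be a polyhedron in ℝⁿ and let F, G be nonempty faces of P. Then F is a face of G if and only if the cone G*|P is a face of the cone F*|P (faces of the cones being understood in the same sense, the cones being polyhedra in ℝⁿ). -/
open scoped RealInnerProductSpace

noncomputable section

/-- The cone `F*|P` of a face `F` of `P`. -/
def coneOf {n : ℕ} (P F : Set (EuclideanSpace ℝ (Fin n))) :
    Set (EuclideanSpace ℝ (Fin n)) :=
  {q | ∃ ρ : ℝ, (∀ u ∈ F, ⟪q, u⟫ = ρ) ∧ ∀ y ∈ P \ F, ρ ≤ ⟪q, y⟫}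

lemma relint_extend {n : ℕ} {s : Set (EuclideanSpace ℝ (Fin n))}
    {g : EuclideanSpace ℝ (Fin n)} (hg : g ∈ intrinsicInterior ℝ s)
    {y : EuclideanSpace ℝ (Fin n)} (hy : y ∈ s) :
    ∃ z ∈ s, ∃ t : ℝ, 0 < t ∧ t < 1 ∧ g = t • y + (1 - t) • z := by
  obtain ⟨gg, hgg, rfl⟩ := hg
  have hys : y ∈ affineSpan ℝ s := subset_affineSpan ℝ s hy
  set f : ℝ → affineSpan ℝ s := fun t =>
    ⟨AffineMap.lineMap y (gg : EuclideanSpace ℝ (Fin n)) t,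
      AffineMap.lineMap_mem t hys gg.2⟩ with hf
  have hcont : Continuous f :=
    Continuous.subtype_mk AffineMap.lineMap_continuous _
  have hU : IsOpen (f ⁻¹' interior (((↑) : affineSpan ℝ s → _) ⁻¹' s)) :=
    hcont.isOpen_preimage _ isOpen_interior
  have h1 : (1 : ℝ) ∈ f ⁻¹' interior (((↑) : affineSpan ℝ s → _) ⁻¹' s) := by
    have hfe : f 1 = gg := by
      apply Subtype.ext
      simp [hf]
    simpa [hfe] using hgg
  obtain ⟨ε, hε, hball⟩ := Metric.isOpen_iff.1 hU 1 h1
  set c : ℝ := 1 + ε / 2 with hcdef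
  have hc : c ∈ Metric.ball (1 : ℝ) ε := by
    rw [Metric.mem_ball, Real.dist_eq, hcdef]
    have he : (1 : ℝ) + ε / 2 - 1 = ε / 2 := by ring
    rw [he, abs_of_pos (by linarith)]
    linarith
  have hz0 : f c ∈ interior (((↑) : affineSpan ℝ s → _) ⁻¹' s) := hball hc
  have hz1 : f c ∈ (((↑) : affineSpan ℝ s → _) ⁻¹' s) := interior_subset hz0
  have hz : (f c : EuclideanSpace ℝ (Fin n)) ∈ s := hz1
  have hc0 : (0 : ℝ) < c := by rw [hcdef]; linarith
  have hc1 : (0 : ℝ) < c - 1 := by rw [hcdef]; linarith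
  refine ⟨(f c : EuclideanSpace ℝ (Fin n)), hz, (c - 1) / c, div_pos hc1 hc0, ?_, ?_⟩
  · rw [div_lt_one hc0]; linarith
  · show (gg : EuclideanSpace ℝ (Fin n)) = _
    have hfc : (f c : EuclideanSpace ℝ (Fin n)) =
        y + c • ((gg : EuclideanSpace ℝ (Fin n)) - y) := by
      show (AffineMap.lineMap y (gg : EuclideanSpace ℝ (Fin n)) c) = _
      rw [AffineMap.lineMap_apply_module]
      module
    rw [hfc]
    have hcne : c ≠ 0 := ne_of_gt hc0
    match_scalars <;> field_simp <;> ring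

/-- For nonempty faces `F, G` of a polyhedron `P`: `F` is a face of `G` if and only if
the cone `G*|P` is a face of the cone `F*|P`. -/
theorem stmt3 {n : ℕ} (P F G : Set (EuclideanSpace ℝ (Fin n)))
    (hP : IsPolyhedron P) (hF : IsFace P F) (hG : IsFace P G)
    (hFne : F.Nonempty) (hGne : G.Nonempty) :
    IsFace G F ↔ IsFace (coneOf P F) (coneOf P G) := by
  obtain ⟨hFP, qF, ρF, hFeq, hFlt⟩ := hF
  obtain ⟨hGP, qG, ρG, hGeq, hGlt⟩ := hG
  obtain ⟨u₀, hu₀⟩ := hFne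
  -- convexity of P
  have hPconv : Convex ℝ P := by
    obtain ⟨N, qs, rs, hPeq⟩ := hP
    rw [hPeq]
    intro x hx y hy a b ha hb hab
    intro j
    have h1 := hx j
    have h2 := hy j
    rw [inner_add_right, real_inner_smul_right, real_inner_smul_right]
    have he : a * rs j + b * rs j = rs j := by rw [← add_mul, hab, one_mul]
    linarith [mul_le_mul_of_nonneg_left h1 ha, mul_le_mul_of_nonneg_left h2 hb]
  -- convexity of G
  have hGconv : Convex ℝ G := by
    intro x hx y hy a b ha hb hab
    have hmem : a • x + b • y ∈ P := hPconv (hGP hx) (hGP hy) ha hb hab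
    by_contra hnot
    have hlt := hGlt _ ⟨hmem, hnot⟩
    rw [inner_add_right, real_inner_smul_right, real_inner_smul_right,
      hGeq x hx, hGeq y hy] at hlt
    have he : a * ρG + b * ρG = ρG := by rw [← add_mul, hab, one_mul]
    linarith
  obtain ⟨g₀, hg₀⟩ := hGne.intrinsicInterior hGconv
  have hg₀G : g₀ ∈ G := intrinsicInterior_subset hg₀
  -- key fact: a functional minimized over G at g₀ is constant on G
  have K : ∀ (q : EuclideanSpace ℝ (Fin n)) (ρ : ℝ), (∀ y ∈ G, ρ ≤ ⟪q, y⟫) →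
      ⟪q, g₀⟫ = ρ → ∀ y ∈ G, ⟪q, y⟫ = ρ := by
    intro q ρ hge h0 y hy
    obtain ⟨z, hz, t, ht0, ht1, hrep⟩ := relint_extend hg₀ hy
    have hsum : ρ = t * ⟪q, y⟫ + (1 - t) * ⟪q, z⟫ := by
      rw [← h0, hrep, inner_add_right, real_inner_smul_right, real_inner_smul_right]
    have h1 := hge y hy
    have h2 := hge z hz
    have hle : ⟪q, y⟫ ≤ ρ := by nlinarith
    linarith
  constructor
  · rintro ⟨hFG, -⟩
    -- subset part
    have hsub : coneOf P G ⊆ coneOf P F := by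
      rintro q ⟨σ, hσeq, hσle⟩
      refine ⟨σ, fun u hu => hσeq u (hFG hu), fun y hy => ?_⟩
      by_cases hyG : y ∈ G
      · exact (hσeq y hyG).ge
      · exact hσle y ⟨hy.1, hyG⟩
    refine ⟨hsub, g₀ - u₀, 0, ?_, ?_⟩
    · rintro q ⟨σ, hσeq, -⟩
      have e1 : ⟪g₀, q⟫ = σ := by rw [real_inner_comm]; exact hσeq g₀ hg₀G
      have e2 : ⟪u₀, q⟫ = σ := by rw [real_inner_comm]; exact hσeq u₀ (hFG hu₀)
      rw [inner_sub_left, e1, e2]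
      ring
    · rintro q ⟨⟨ρ, hρeq, hρle⟩, hqG⟩
      -- q ≥ ρ on all of P
      have hPge : ∀ y ∈ P, ρ ≤ ⟪q, y⟫ := by
        intro y hy
        by_cases hyF : y ∈ F
        · exact (hρeq y hyF).ge
        · exact hρle y ⟨hy, hyF⟩
      have hGge : ∀ y ∈ G, ρ ≤ ⟪q, y⟫ := fun y hy => hPge y (hGP hy)
      -- q is not minimized at g₀, else q would be constant on G and in coneOf P G
      have hne : ⟪q, g₀⟫ ≠ ρ := by
        intro h0
        apply hqG
        refine ⟨ρ, K q ρ hGge h0, fun y hy => hPge y hy.1⟩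
      have hgt : ρ < ⟪q, g₀⟫ := lt_of_le_of_ne (hGge g₀ hg₀G) (Ne.symm hne)
      have e1 : ⟪g₀, q⟫ = ⟪q, g₀⟫ := real_inner_comm _ _
      have e2 : ⟪u₀, q⟫ = ρ := by rw [real_inner_comm]; exact hρeq u₀ hu₀
      rw [inner_sub_left, e1, e2]
      linarith
  · rintro ⟨hsub, -⟩
    have hqG : qG ∈ coneOf P G := ⟨ρG, hGeq, fun y hy => (hGlt y hy).le⟩
    obtain ⟨ρ', h1, h2⟩ := hsub hqG
    -- F ⊆ G
    have hFG : F ⊆ G := by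
      intro u hu
      by_contra huG
      have hlt := hGlt u ⟨hFP hu, huG⟩
      rw [h1 u hu] at hlt
      obtain ⟨g, hg⟩ := hGne
      by_cases hgF : g ∈ F
      · linarith [hGeq g hg, h1 g hgF]
      · have := h2 g ⟨hGP hg, hgF⟩
        rw [hGeq g hg] at this
        linarith
    exact ⟨hFG, qF, ρF, hFeq, fun y hy => hFlt y ⟨hGP hy.1, hy.2⟩⟩
end
end

section
/- Let P be a nonempty polyhedron in ℝⁿ with dim P = m ≤ n. Then there exist orthonormal vectors n_1, …, n_{n−m} ∈ ℝⁿ, scalars s_1, …, s_{n−m} ∈ ℝ, vectors q_1, …, q_M ∈ span{n_1,…,n_{n−m}}^⊥ = V(P), and scalars r_1, …, r_M ∈ ℝ such that: (a) the affine span of P equals ⋂_{i=1}^{n−m} {x ∈ ℝⁿ : ⟨n_i, x⟩ = s_i} (equal to ℝⁿ when m = n), and (b) P = {x ∈ affine span of P : ⟨q_j, x⟩ ≥ r_j for all j = 1, …, M}. -/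
open scoped RealInnerProductSpace

noncomputable section

/-! The affine span of `P` is `a + V(P)` for any `a ∈ P`, so it is cut out by the equations
`⟪nᵢ, x⟫ = ⟪nᵢ, a⟫` for an orthonormal basis `(nᵢ)` of `V(P)ᗮ`. Each defining half-space
`r ≤ ⟪q, x⟫` of `P` may be replaced by one whose normal is the orthogonal projection `q'` of
`q` onto `V(P)`: on the affine span, `⟪q - q', x⟫` is the constant `⟪q - q', a⟫`, which is
absorbed into the right-hand side. -/

section InnerProductSpace

variable {E : Type*} [NormedAddCommGroup E] [InnerProductSpace ℝ E]

theorem mem_orthogonal_span_range_iff {ι : Type*} {v : ι → E} {x : E} :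
    x ∈ (Submodule.span ℝ (Set.range v))ᗮ ↔ ∀ i, ⟪v i, x⟫ = 0 := by
  rw [← Submodule.span_singleton_le_iff_mem, ← Submodule.isOrtho_iff_le, Submodule.isOrtho_comm,
    Submodule.isOrtho_span]
  simp

theorem Submodule.exists_orthonormal_fin_span_eq (K : Submodule ℝ E) [FiniteDimensional ℝ K]
    {k : ℕ} (hk : Module.finrank ℝ K = k) :
    ∃ v : Fin k → E, Orthonormal ℝ v ∧ Submodule.span ℝ (Set.range v) = K := by
  let b := (stdOrthonormalBasis ℝ K).reindex (finCongr hk)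
  refine ⟨K.subtype ∘ b, b.orthonormal.comp_linearIsometry K.subtypeₗᵢ, ?_⟩
  rw [Set.range_comp, ← Submodule.map_span, ← b.coe_toBasis, b.toBasis.span_eq,
    Submodule.map_subtype_top]

namespace AffineSubspace

variable (S : AffineSubspace ℝ E)

theorem coe_eq_iInter_inner_eq {ι : Type*} {a : E} (ha : a ∈ S) {v : ι → E}
    (hv : (Submodule.span ℝ (Set.range v))ᗮ = S.direction) :
    (S : Set E) = ⋂ i, {x | ⟪v i, x⟫ = ⟪v i, a⟫} := by
  ext x
  rw [SetLike.mem_coe, ← S.vsub_right_mem_direction_iff_mem ha, vsub_eq_sub, ← hv,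
    mem_orthogonal_span_range_iff]
  simp only [inner_sub_right, sub_eq_zero, Set.mem_iInter, Set.mem_ofPred_eq]

theorem inner_eq_of_mem_orthogonal_direction {w x a : E} (hw : w ∈ S.directionᗮ)
    (hx : x ∈ S) (ha : a ∈ S) : ⟪w, x⟫ = ⟪w, a⟫ := by
  have h := Submodule.inner_left_of_mem_orthogonal (S.vsub_mem_direction hx ha) hw
  rwa [vsub_eq_sub, inner_sub_right, sub_eq_zero] at h

variable [S.direction.HasOrthogonalProjection]

theorem le_inner_iff_le_inner_starProjection {q x a : E} {r : ℝ} (hx : x ∈ S) (ha : a ∈ S) :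
    r ≤ ⟪q, x⟫ ↔
      r - ⟪q - S.direction.starProjection q, a⟫ ≤ ⟪S.direction.starProjection q, x⟫ := by
  have h := S.inner_eq_of_mem_orthogonal_direction
    (S.direction.sub_starProjection_mem_orthogonal q) hx ha
  rw [inner_sub_left] at h
  constructor <;> intro <;> linarith

theorem exists_halfspaces_normal_mem_direction {ι : Type*} {q : ι → E} {r : ι → ℝ}
    (hS : {y | ∀ j, r j ≤ ⟪q j, y⟫} ⊆ S) (hne : (S : Set E).Nonempty) :
    ∃ (q' : ι → E) (r' : ι → ℝ), (∀ j, q' j ∈ S.direction) ∧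
      {y | ∀ j, r j ≤ ⟪q j, y⟫} = {x ∈ (S : Set E) | ∀ j, r' j ≤ ⟪q' j, x⟫} := by
  obtain ⟨a, ha⟩ := hne
  refine ⟨fun j => S.direction.starProjection (q j),
    fun j => r j - ⟪q j - S.direction.starProjection (q j), a⟫,
    fun j => S.direction.starProjection_apply_mem (q j), ?_⟩
  ext x
  simp only [Set.mem_ofPred_eq]
  constructor
  · intro hx
    have hxS : x ∈ S := hS hx
    exact ⟨hxS, fun j => (S.le_inner_iff_le_inner_starProjection hxS ha).mp (hx j)⟩
  · rintro ⟨hxS, hx⟩ j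
    exact (S.le_inner_iff_le_inner_starProjection hxS ha).mpr (hx j)

end AffineSubspace

end InnerProductSpace

theorem direction_affineSpan_eq_dirSpan {n : ℕ} (P : Set (EuclideanSpace ℝ (Fin n))) :
    (affineSpan ℝ P).direction = dirSpan P := by
  rw [direction_affineSpan, vectorSpan_def, dirSpan]
  congr 1
  ext v
  simp only [Set.mem_vsub, vsub_eq_sub, Set.mem_ofPred_eq, eq_comm]

theorem stmt4_general {n : ℕ} (P : Set (EuclideanSpace ℝ (Fin n))) (m : ℕ)
    (hP : IsPolyhedron P) (hne : P.Nonempty)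
    (hm : Module.finrank ℝ ↥(dirSpan P) = m) :
    ∃ (nv : Fin (n - m) → EuclideanSpace ℝ (Fin n)) (s : Fin (n - m) → ℝ)
      (M : ℕ) (q : Fin M → EuclideanSpace ℝ (Fin n)) (r : Fin M → ℝ),
      Orthonormal ℝ nv ∧
      (Submodule.span ℝ (Set.range nv))ᗮ = dirSpan P ∧
      (∀ j, q j ∈ (Submodule.span ℝ (Set.range nv))ᗮ) ∧
      (affineSpan ℝ P : Set (EuclideanSpace ℝ (Fin n))) = ⋂ i, {x | ⟪nv i, x⟫ = s i} ∧
      P = {x ∈ (affineSpan ℝ P : Set (EuclideanSpace ℝ (Fin n))) |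
            ∀ j, r j ≤ ⟪q j, x⟫} := by
  have hdir := direction_affineSpan_eq_dirSpan P
  have hdim : Module.finrank ℝ (dirSpan P)ᗮ = n - m := by
    have h := (dirSpan P).finrank_add_finrank_orthogonal
    rw [hm, finrank_euclideanSpace_fin] at h
    omega
  obtain ⟨nv, hnv, hspan⟩ := (dirSpan P)ᗮ.exists_orthonormal_fin_span_eq hdim
  have horth : (Submodule.span ℝ (Set.range nv))ᗮ = dirSpan P := by
    rw [hspan, Submodule.orthogonal_orthogonal]
  obtain ⟨a, ha⟩ := hne
  have haS : a ∈ affineSpan ℝ P := subset_affineSpan ℝ P ha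
  obtain ⟨N, q₀, r₀, hP⟩ := hP
  obtain ⟨q, r, hq, hPS⟩ := (affineSpan ℝ P).exists_halfspaces_normal_mem_direction
    (by rw [← hP]; exact subset_affineSpan ℝ P) ⟨a, haS⟩
  refine ⟨nv, fun i => ⟪nv i, a⟫, N, q, r, hnv, horth, fun j => horth ▸ hdir ▸ hq j,
    (affineSpan ℝ P).coe_eq_iInter_inner_eq haS (horth.trans hdir.symm), hP.trans hPS⟩

/-- Splitting of the generator of a low-dimensional polyhedron: a nonempty polyhedron `P`
of dimension `m ≤ n` is cut out, inside its affine span, by half-spaces whose normals lie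
in `V(P)`, while the affine span itself is cut out by `n - m` orthonormal hyperplane
normals whose orthogonal complement is `V(P)`. -/
theorem stmt4 {n : ℕ} (P : Set (EuclideanSpace ℝ (Fin n))) (m : ℕ)
    (hP : IsPolyhedron P) (hne : P.Nonempty)
    (hm : Module.finrank ℝ ↥(dirSpan P) = m) (hmn : m ≤ n) :
    ∃ (nv : Fin (n - m) → EuclideanSpace ℝ (Fin n)) (s : Fin (n - m) → ℝ)
      (M : ℕ) (q : Fin M → EuclideanSpace ℝ (Fin n)) (r : Fin M → ℝ),
      Orthonormal ℝ nv ∧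
      (Submodule.span ℝ (Set.range nv))ᗮ = dirSpan P ∧
      (∀ j, q j ∈ (Submodule.span ℝ (Set.range nv))ᗮ) ∧
      (affineSpan ℝ P : Set (EuclideanSpace ℝ (Fin n))) = ⋂ i, {x | ⟪nv i, x⟫ = s i} ∧
      P = {x ∈ (affineSpan ℝ P : Set (EuclideanSpace ℝ (Fin n))) |
            ∀ j, r j ≤ ⟪q j, x⟫} :=
  stmt4_general P m hP hne hm
end
end

section
/- Let P be a polyhedron in ℝⁿ with dim P = n and let F = ⋂_{j=1}^{M} F_j be a nonempty face of P, where each F_j = π_{q_j,r_j} ∩ P is a face of P with dim F_j = n − 1 and (F_j*)°|P = {c·q_j : c > 0}. Assume moreover that span{q_1, …, q_M} = V(F)^⊥ and that the representation is irredundant, i.e., for each l ∈ {1,…,M} the set (⋂_{j ≠ l} F_j) \ F_l is nonempty. Then (F*)°|P = CoSp°(q_1,…,q_M) = {∑_{j=1}^{M} c_j q_j : c_j > 0 for all j}. -/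
open scoped RealInnerProductSpace

noncomputable section

/-- The interior `(F*)°|P` of the cone of a face `F` of `P`. -/
def coneInterior {n : ℕ} (P F : Set (EuclideanSpace ℝ (Fin n))) :
    Set (EuclideanSpace ℝ (Fin n)) :=
  {q | q ≠ 0 ∧ ∃ ρ : ℝ, (∀ u ∈ F, ⟪q, u⟫ = ρ) ∧ ∀ y ∈ P \ F, ρ < ⟪q, y⟫}

/-- Cone representation: if `F = ⋂ⱼ Fⱼ` is a nonempty face of an `n`-dimensional
polyhedron `P`, written irredundantly as an intersection of `(n-1)`-dimensional faces
`Fⱼ = π_{qⱼ,rⱼ} ∩ P` with `(Fⱼ*)°|P = {c • qⱼ : c > 0}` and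
`span {q₁, …, q_M} = V(F)ᗮ`, then `(F*)°|P = {∑ⱼ cⱼ • qⱼ : all cⱼ > 0}`. -/
theorem stmt7 {n M : ℕ} (hM : 0 < M) (P : Set (EuclideanSpace ℝ (Fin n)))
    (Fj : Fin M → Set (EuclideanSpace ℝ (Fin n)))
    (q : Fin M → EuclideanSpace ℝ (Fin n)) (r : Fin M → ℝ)
    (F : Set (EuclideanSpace ℝ (Fin n)))
    (hP : IsPolyhedron P) (hPdim : Module.finrank ℝ ↥(dirSpan P) = n)
    (hFj : ∀ j, IsFace P (Fj j))
    (hFjeq : ∀ j, Fj j = {y | ⟪q j, y⟫ = r j} ∩ P)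
    (hFjdim : ∀ j, Module.finrank ℝ ↥(dirSpan (Fj j)) = n - 1)
    (hFjcone : ∀ j, coneInterior P (Fj j) = {x | ∃ c : ℝ, 0 < c ∧ x = c • q j})
    (hFeq : F = ⋂ j, Fj j)
    (hFface : IsFace P F) (hFne : F.Nonempty)
    (hspan : Submodule.span ℝ (Set.range q) = (dirSpan F)ᗮ)
    (hirr : ∀ l : Fin M, ((⋂ j ∈ {j | j ≠ l}, Fj j) \ Fj l).Nonempty) :
    coneInterior P F =
      {x | ∃ c : Fin M → ℝ, (∀ j, 0 < c j) ∧ x = ∑ j, c j • q j} := by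

  classical
  obtain ⟨u₀, hu₀⟩ := hFne
  have hFsub : ∀ j, F ⊆ Fj j := fun j => hFeq ▸ Set.iInter_subset _ j
  have hu₀j : ∀ j, u₀ ∈ Fj j := fun j => hFsub j hu₀
  have hu₀r : ∀ j, ⟪q j, u₀⟫ = r j := by
    intro j
    have h := hu₀j j
    rw [hFjeq j] at h
    exact h.1
  have hqmem : ∀ j, q j ∈ coneInterior P (Fj j) := by
    intro j; rw [hFjcone j]; exact ⟨1, one_pos, (one_smul ℝ _).symm⟩
  have hq0 : ∀ j, q j ≠ 0 := fun j => (hqmem j).1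
  have hstrict : ∀ j, ∀ y ∈ P, y ∉ Fj j → r j < ⟪q j, y⟫ := by
    intro j y hyP hyF
    obtain ⟨ρ, hρ1, hρ2⟩ := (hqmem j).2
    have hρr : ρ = r j := by rw [← hρ1 u₀ (hu₀j j), hu₀r j]
    exact hρr ▸ hρ2 y ⟨hyP, hyF⟩
  have hge : ∀ j, ∀ y ∈ P, r j ≤ ⟪q j, y⟫ := by
    intro j y hyP
    by_cases hy : y ∈ Fj j
    · rw [hFjeq j] at hy; exact le_of_eq hy.1.symm
    · exact le_of_lt (hstrict j y hyP hy)
  have hinner_sum : ∀ (c : Fin M → ℝ) (y : EuclideanSpace ℝ (Fin n)),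
      ⟪∑ j, c j • q j, y⟫ = ∑ j, c j * ⟪q j, y⟫ := by
    intro c y
    rw [sum_inner]
    exact Finset.sum_congr rfl fun j _ => real_inner_smul_left _ _ _
  ext x
  constructor
  · rintro ⟨hx0, ρ, hρ1, hρ2⟩
    have hρu : ⟪x, u₀⟫ = ρ := hρ1 u₀ hu₀
    have hxperp : x ∈ (dirSpan F)ᗮ := by
      rw [Submodule.mem_orthogonal]
      intro v hv
      induction hv using Submodule.span_induction with
      | mem v hvmem =>
        obtain ⟨a, ha, b, hb, rfl⟩ := hvmem
        have h1 : ⟪a, x⟫ = ρ := (real_inner_comm x a).trans (hρ1 a ha)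
        have h2 : ⟪b, x⟫ = ρ := (real_inner_comm x b).trans (hρ1 b hb)
        rw [inner_sub_left, h1, h2, sub_self]
      | zero => exact inner_zero_left x
      | add v w _ _ hv hw => rw [inner_add_left, hv, hw, add_zero]
      | smul t v _ hv => rw [inner_smul_left, hv, mul_zero]
    rw [← hspan] at hxperp
    obtain ⟨c, hc⟩ := (Submodule.mem_span_range_iff_exists_fun ℝ).mp hxperp
    refine ⟨c, ?_, hc.symm⟩
    intro l
    by_cases hex : ∃ j₀, j₀ ≠ l
    · obtain ⟨j₀, hj₀⟩ := hex
      obtain ⟨y, hy1, hy2⟩ := hirr l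
      have hyj : ∀ j, j ≠ l → y ∈ Fj j := by
        intro j hj
        exact Set.mem_iInter₂.mp hy1 j hj
      have hyP : y ∈ P := (hFj j₀).1 (hyj j₀ hj₀)
      have hyF : y ∉ F := fun h => hy2 (hFsub l h)
      have h1 : ρ < ⟪x, y⟫ := hρ2 y ⟨hyP, hyF⟩
      have h2 : (0:ℝ) < ⟪x, y - u₀⟫ := by
        rw [inner_sub_right, hρu]; linarith
      have h3 : ⟪x, y - u₀⟫ = c l * ⟪q l, y - u₀⟫ := by
        rw [← hc, hinner_sum]
        refine Finset.sum_eq_single_of_mem l (Finset.mem_univ l) ?_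
        intro j _ hj
        have hyjr : ⟪q j, y⟫ = r j := by
          have := hyj j hj
          rw [hFjeq j] at this
          exact this.1
        rw [inner_sub_right, hyjr, hu₀r j, sub_self, mul_zero]
      have h4 : (0:ℝ) < ⟪q l, y - u₀⟫ := by
        rw [inner_sub_right, hu₀r l]
        have := hstrict l y hyP hy2
        linarith
      rw [h3] at h2
      rcases mul_pos_iff.mp h2 with h | h
      · exact h.1
      · linarith [h.2]
    · push_neg at hex
      have hFl : F = Fj l := by
        rw [hFeq]
        apply Set.Subset.antisymm (Set.iInter_subset _ l)
        intro y hy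
        exact Set.mem_iInter.mpr fun j => (hex j) ▸ hy
      have hxmem : x ∈ coneInterior P (Fj l) := ⟨hx0, ρ, fun u hu => hρ1 u (hFl ▸ hu),
        fun y hy => hρ2 y ⟨hy.1, fun h => hy.2 (hFl ▸ h)⟩⟩
      rw [hFjcone l] at hxmem
      obtain ⟨a, ha, hxa⟩ := hxmem
      have hsum : ∑ j, c j • q j = c l • q l :=
        Fintype.sum_eq_single l (fun j hj => absurd (hex j) hj)
      have : (c l - a) • q l = 0 := by
        rw [sub_smul, sub_eq_zero, ← hsum, hc, hxa]
      rcases smul_eq_zero.mp this with h | h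
      · rw [sub_eq_zero] at h; rw [h]; exact ha
      · exact absurd h (hq0 l)
  · rintro ⟨c, hcpos, rfl⟩
    have hkey : ∀ y ∈ P, y ∉ F → ∑ j, c j * r j < ∑ j, c j * ⟪q j, y⟫ := by
      intro y hyP hyF
      have : ∃ l, y ∉ Fj l := by
        by_contra h
        push_neg at h
        exact hyF (hFeq ▸ Set.mem_iInter.mpr h)
      obtain ⟨l, hl⟩ := this
      refine Finset.sum_lt_sum (fun j _ => ?_) ⟨l, Finset.mem_univ l, ?_⟩
      · exact mul_le_mul_of_nonneg_left (hge j y hyP) (hcpos j).le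
      · exact mul_lt_mul_of_pos_left (hstrict l y hyP hl) (hcpos l)
    have hconst : ∀ u ∈ F, ⟪∑ j, c j • q j, u⟫ = ∑ j, c j * r j := by
      intro u hu
      rw [hinner_sum]
      refine Finset.sum_congr rfl fun j _ => ?_
      have := hFsub j hu
      rw [hFjeq j] at this
      rw [this.1]
    refine ⟨?_, ∑ j, c j * r j, hconst, fun y hy => ?_⟩
    · intro h0
      have hρ0 : ∑ j, c j * r j = 0 := by
        rw [← hconst u₀ hu₀, h0, inner_zero_left]
      set l : Fin M := ⟨0, hM⟩ with hl
      by_cases hex : ∃ j₀, j₀ ≠ l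
      · obtain ⟨j₀, hj₀⟩ := hex
        obtain ⟨y, hy1, hy2⟩ := hirr l
        have hyj : ∀ j, j ≠ l → y ∈ Fj j := fun j hj => Set.mem_iInter₂.mp hy1 j hj
        have hyP : y ∈ P := (hFj j₀).1 (hyj j₀ hj₀)
        have := hkey y hyP (fun h => hy2 (hFsub l h))
        rw [hρ0, ← hinner_sum, h0, inner_zero_left] at this
        exact lt_irrefl _ this
      · push_neg at hex
        have hsum : ∑ j, c j • q j = c l • q l :=
          Fintype.sum_eq_single l (fun j hj => absurd (hex j) hj)
        rw [hsum] at h0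
        rcases smul_eq_zero.mp h0 with h | h
        · exact (hcpos l).ne' h
        · exact hq0 l h
    · rw [hinner_sum]
      exact hkey y hy.1 hy.2
end
end

section
/- Let P = ⋂_{j=1}^{N} {x ∈ ℝⁿ : ⟨q_j, x⟩ ≥ r_j} be a nonempty polyhedron. Then for every e ∈ ℝⁿ, the linear functional x ↦ ⟨e, x⟩ is bounded below on P (i.e., inf{⟨e, x⟩ : x ∈ P} > −∞) if and only if e ∈ CoSp(q_1,…,q_N). -/
/-!
If `e = ∑ cⱼ qⱼ` with `cⱼ ≥ 0`, then `⟪e, x⟫ ≥ ∑ cⱼ rⱼ` on `P`. Conversely, the cone generated by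
the `qⱼ` is closed: by the conic Carathéodory argument it is a finite union of images of the closed
orthant under injective linear maps. So if `e` lies outside it, Farkas' lemma gives `y` with
`⟪qⱼ, y⟫ ≥ 0` and `⟪e, y⟫ < 0`; the ray `x + t • y` (`t ≥ 0`) stays in `P` while `⟪e, ·⟫` tends
to `-∞`.
-/

open scoped RealInnerProductSpace

open Set

namespace PointedCone

section Module

variable {ι E : Type*} [AddCommGroup E] [Module ℝ E]

theorem mem_hull_range_iff [Fintype ι] {q : ι → E} {x : E} :
    x ∈ hull ℝ (range q) ↔ ∃ c : ι → ℝ, (∀ i, 0 ≤ c i) ∧ x = ∑ i, c i • q i := by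
  rw [Submodule.mem_span_range_iff_exists_fun]
  constructor
  · rintro ⟨c, rfl⟩
    exact ⟨fun i => c i, fun i => (c i).2, rfl⟩
  · rintro ⟨c, hc, rfl⟩
    exact ⟨fun i => ⟨c i, hc i⟩, rfl⟩

/-- Subtract from `c` the largest multiple of `d` that keeps it nonnegative. -/
theorem exists_nonneg_coeff_eq_zero_of_sum_smul_eq_zero [Fintype ι] {q : ι → E} {d : ι → ℝ}
    (hd : ∑ i, d i • q i = 0) {j : ι} (hj : 0 < d j) {c : ι → ℝ} (hc : ∀ i, 0 ≤ c i) :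
    ∃ c' : ι → ℝ, ∃ i₀, (∀ i, 0 ≤ c' i) ∧ c' i₀ = 0 ∧ ∑ i, c' i • q i = ∑ i, c i • q i := by
  classical
  obtain ⟨i₀, hi₀, hmin⟩ := (Finset.univ.filter (0 < d ·)).exists_min_image (fun i => c i / d i)
    ⟨j, by simpa using hj⟩
  simp only [Finset.mem_filter, Finset.mem_univ, true_and] at hi₀ hmin
  set t := c i₀ / d i₀
  have ht : 0 ≤ t := div_nonneg (hc i₀) hi₀.le
  refine ⟨fun i => c i - t * d i, i₀, fun i => ?_, sub_eq_zero.mpr (div_mul_cancel₀ _ hi₀.ne').symm,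
    ?_⟩
  · rcases le_or_gt (d i) 0 with hdi | hdi
    · nlinarith [hc i]
    · exact sub_nonneg.mpr ((le_div_iff₀ hdi).mp (hmin i hdi))
  · simp only [sub_smul, mul_smul, Finset.sum_sub_distrib, ← Finset.smul_sum, hd, smul_zero,
      sub_zero]

theorem hull_range_eq_iUnion_succAbove {m : ℕ} {q : Fin (m + 1) → E}
    (hq : ¬LinearIndependent ℝ q) :
    (hull ℝ (range q) : Set E) = ⋃ j : Fin (m + 1), (hull ℝ (range (q ∘ j.succAbove)) : Set E) := by
  refine Subset.antisymm (fun x hx => ?_)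
    (iUnion_subset fun j => Submodule.span_mono (range_comp_subset_range _ _))
  obtain ⟨c, hc, rfl⟩ := mem_hull_range_iff.mp hx
  obtain ⟨d, hd, j, hj⟩ : ∃ d : Fin (m + 1) → ℝ, ∑ i, d i • q i = 0 ∧ ∃ j, 0 < d j := by
    obtain ⟨g, hg, j, hj⟩ := Fintype.not_linearIndependent_iff.mp hq
    rcases hj.lt_or_gt with hj | hj
    · exact ⟨-g, by simp [Finset.sum_neg_distrib, hg], j, by simpa using hj⟩
    · exact ⟨g, hg, j, hj⟩
  obtain ⟨c', i₀, hc', hc'i₀, hsum⟩ := exists_nonneg_coeff_eq_zero_of_sum_smul_eq_zero hd hj hc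
  refine mem_iUnion.mpr ⟨i₀, mem_hull_range_iff.mpr ⟨c' ∘ i₀.succAbove, fun i => hc' _, ?_⟩⟩
  rw [← hsum, Fin.sum_univ_succAbove _ i₀, hc'i₀, zero_smul, zero_add]
  rfl

end Module

section Topology

variable {ι E : Type*} [AddCommGroup E] [Module ℝ E] [TopologicalSpace E] [IsTopologicalAddGroup E]
  [ContinuousSMul ℝ E] [T2Space E]

theorem isClosed_hull_range_of_linearIndependent [Finite ι] {q : ι → E}
    (hq : LinearIndependent ℝ q) : IsClosed (hull ℝ (range q) : Set E) := by
  have := Fintype.ofFinite ι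
  have himage : (hull ℝ (range q) : Set E) = Fintype.linearCombination ℝ q '' Ici 0 := by
    ext x
    simp only [SetLike.mem_coe, mem_hull_range_iff, mem_image, mem_Ici,
      Fintype.linearCombination_apply, Pi.le_def, Pi.zero_apply, eq_comm (a := x)]
  rw [himage]
  refine (LinearMap.isClosedEmbedding_of_injective ?_).isClosedMap _ isClosed_Ici
  exact LinearMap.ker_eq_bot.mpr (linearIndependent_iff_injective_fintypeLinearCombination.mp hq)

theorem isClosed_hull_range_fin {N : ℕ} (q : Fin N → E) : IsClosed (hull ℝ (range q) : Set E) := by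
  induction N with
  | zero => exact isClosed_hull_range_of_linearIndependent linearIndependent_empty_type
  | succ m ih =>
    by_cases hq : LinearIndependent ℝ q
    · exact isClosed_hull_range_of_linearIndependent hq
    · rw [hull_range_eq_iUnion_succAbove hq]
      exact isClosed_iUnion_of_finite fun j => ih _

theorem isClosed_hull_range [Finite ι] (q : ι → E) : IsClosed (hull ℝ (range q) : Set E) := by
  obtain ⟨N, ⟨e⟩⟩ := Finite.exists_equiv_fin ι
  simpa [e.symm.surjective.range_comp] using isClosed_hull_range_fin (q ∘ e.symm)

end Topology

end PointedCone

section Polyhedron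

open PointedCone

variable {ι H : Type*} [NormedAddCommGroup H] [InnerProductSpace ℝ H]

def polyhedron (q : ι → H) (r : ι → ℝ) : Set H := {x | ∀ j, r j ≤ ⟪q j, x⟫}

theorem add_smul_mem_polyhedron {q : ι → H} {r : ι → ℝ} {x y : H} (hx : x ∈ polyhedron q r)
    (hy : ∀ j, 0 ≤ ⟪q j, y⟫) {t : ℝ} (ht : 0 ≤ t) : x + t • y ∈ polyhedron q r := fun j => by
  rw [inner_add_right, real_inner_smul_right]
  nlinarith [hx j, hy j]

theorem sum_mul_le_inner_of_mem_polyhedron [Fintype ι] {q : ι → H} {r : ι → ℝ} {c : ι → ℝ}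
    (hc : ∀ j, 0 ≤ c j) {x : H} (hx : x ∈ polyhedron q r) :
    ∑ j, c j * r j ≤ ⟪∑ j, c j • q j, x⟫ := by
  rw [sum_inner]
  refine Finset.sum_le_sum fun j _ => ?_
  rw [real_inner_smul_left]
  exact mul_le_mul_of_nonneg_left (hx j) (hc j)

theorem exists_inner_neg_of_notMem_hull [CompleteSpace H] [Finite ι] {q : ι → H} {e : H}
    (he : e ∉ hull ℝ (range q)) : ∃ y, (∀ j, 0 ≤ ⟪q j, y⟫) ∧ ⟪e, y⟫ < 0 := by
  obtain ⟨y, hy, hey⟩ :=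
    ProperCone.hyperplane_separation' ⟨hull ℝ (range q), isClosed_hull_range q⟩ he
  exact ⟨y, fun j => hy _ (Submodule.subset_span (mem_range_self j)), hey⟩

theorem bddBelow_inner_polyhedron_iff [CompleteSpace H] [Fintype ι] {q : ι → H} {r : ι → ℝ}
    (hne : (polyhedron q r).Nonempty) (e : H) :
    BddBelow ((⟪e, ·⟫) '' polyhedron q r) ↔ e ∈ hull ℝ (range q) := by
  refine ⟨fun ⟨b, hb⟩ => ?_, fun he => ?_⟩
  · by_contra he
    obtain ⟨y, hy, hey⟩ := exists_inner_neg_of_notMem_hull he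
    obtain ⟨x, hx⟩ := hne
    set t := (|⟪e, x⟫ - b| + 1) / -⟪e, y⟫
    have ht : 0 ≤ t := div_nonneg (by positivity) (neg_nonneg.mpr hey.le)
    have hbt := hb (mem_image_of_mem _ (add_smul_mem_polyhedron hx hy ht))
    have htmul : t * -⟪e, y⟫ = |⟪e, x⟫ - b| + 1 := div_mul_cancel₀ _ (neg_pos.mpr hey).ne'
    simp only [inner_add_right, real_inner_smul_right] at hbt
    linarith [le_abs_self (⟪e, x⟫ - b)]
  · obtain ⟨c, hc, rfl⟩ := mem_hull_range_iff.mp he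
    exact ⟨∑ j, c j * r j,
      forall_mem_image.mpr fun x hx => sum_mul_le_inner_of_mem_polyhedron hc hx⟩

end Polyhedron

/-- For a nonempty polyhedron `P = ⋂ⱼ {x : ⟨qⱼ, x⟩ ≥ rⱼ}` and any `e ∈ ℝⁿ`, the linear
functional `x ↦ ⟨e, x⟩` is bounded below on `P` if and only if `e` is a nonnegative
combination of the normal vectors `q₁, …, q_N`. -/
theorem stmt8 {n N : ℕ} (q : Fin N → EuclideanSpace ℝ (Fin n)) (r : Fin N → ℝ)
    (P : Set (EuclideanSpace ℝ (Fin n)))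
    (hP : P = {x | ∀ j, r j ≤ ⟪q j, x⟫}) (hne : P.Nonempty)
    (e : EuclideanSpace ℝ (Fin n)) :
    (∃ b : ℝ, ∀ x ∈ P, b ≤ ⟪e, x⟫) ↔
      ∃ c : Fin N → ℝ, (∀ j, 0 ≤ c j) ∧ e = ∑ j, c j • q j := by
  subst hP
  have h := bddBelow_inner_polyhedron_iff hne e
  simp only [bddBelow_def, forall_mem_image, PointedCone.mem_hull_range_iff] at h
  exact h
end

section
/- Let P be a polyhedron in ℝⁿ, G a nonempty face of P, and q ∈ (G*)°|P. Then there exists r > 0, depending only on q, P and G, such that for every x ∈ P \ G and every m ∈ G, the orthogonal projection w of x − m onto V(G)^⊥ is nonzero and satisfies ⟨q, w⟩ ≥ r·‖w‖. -/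
open scoped RealInnerProductSpace

noncomputable section

open Filter Topology

/-!
Choose `m₀ ∈ G` at which every constraint of `P` that is not tight on all of `G` is strict.
From `m₀` one can move a little in every direction `w` that satisfies the constraints tight
on `G`; if moreover `w ⊥ V(G)` and `⟪q, w⟫ ≤ 0`, the new point stays in `G`, forcing `w = 0`.
So `⟪q, ·⟫` is positive on the nonzero elements of the closed cone of such `w`, and by
compactness of its unit sphere it is bounded below by `r‖·‖` there. The projection onto
`V(G)ᗮ` of any `x - m` with `x ∈ P`, `m ∈ G` lies in this cone and has the same pairing with
`q` as `x - m`, which is positive for `x ∉ G`.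
-/

theorem dirSpan_eq_vectorSpan {n : ℕ} (A : Set (EuclideanSpace ℝ (Fin n))) :
    dirSpan A = vectorSpan ℝ A := by
  rw [dirSpan, vectorSpan_def]
  congr 1
  ext v
  simp [Set.mem_vsub, eq_comm]

theorem exists_pos_mul_norm_le_of_pos_on_cone {F : Type*} [NormedAddCommGroup F]
    [NormedSpace ℝ F] [ProperSpace F] {K : Set F} (hK : IsClosed K)
    (hsmul : ∀ w ∈ K, ∀ c : ℝ, 0 < c → c • w ∈ K) (ℓ : StrongDual ℝ F)
    (hpos : ∀ w ∈ K, w ≠ 0 → 0 < ℓ w) : ∃ r > 0, ∀ w ∈ K, r * ‖w‖ ≤ ℓ w := by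
  have hcompact : IsCompact (K ∩ Metric.sphere 0 1) :=
    (isCompact_sphere 0 1).inter_left hK
  obtain ⟨r, hr, hrS⟩ := hcompact.exists_forall_le' ℓ.continuous.continuousOn
    fun u hu => hpos u hu.1 (ne_zero_of_mem_unit_sphere ⟨u, hu.2⟩)
  refine ⟨r, hr, fun w hw => ?_⟩
  rcases eq_or_ne w 0 with rfl | hw0
  · simp
  have hn : 0 < ‖w‖ := norm_pos_iff.2 hw0
  have hunit := hrS (‖w‖⁻¹ • w) ⟨hsmul w hw _ (inv_pos.2 hn), by simp [norm_smul, hn.ne']⟩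
  rw [map_smul, smul_eq_mul] at hunit
  calc r * ‖w‖ ≤ (‖w‖⁻¹ * ℓ w) * ‖w‖ := by gcongr
    _ = ℓ w := by field_simp

section InnerProductSpace

variable {E : Type*} [NormedAddCommGroup E] [InnerProductSpace ℝ E]

theorem mem_orthogonal_vectorSpan_of_inner_eq {G : Set E} {u : E} {c : ℝ}
    (h : ∀ g ∈ G, ⟪u, g⟫ = c) : u ∈ (vectorSpan ℝ G)ᗮ := by
  have hle : vectorSpan ℝ G ≤ (ℝ ∙ u)ᗮ := by
    rw [vectorSpan_def, Submodule.span_le]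
    rintro _ ⟨x, hx, y, hy, rfl⟩
    simp [Submodule.mem_orthogonal_singleton_iff_inner_right, inner_sub_right, h x hx, h y hy]
  exact (Submodule.mem_orthogonal _ u).2 fun v hv => by
    rw [real_inner_comm]; exact Submodule.mem_orthogonal_singleton_iff_inner_right.1 (hle hv)

theorem inner_orthogonalProjectionOnto_of_mem {K : Submodule ℝ E} [K.HasOrthogonalProjection]
    {u : E} (hu : u ∈ K) (v : E) : ⟪u, (K.orthogonalProjectionOnto v : E)⟫ = ⟪u, v⟫ := by
  rw [← Submodule.starProjection_apply, ← Submodule.inner_starProjection_left_eq_right,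
    K.starProjection_eq_self_iff.2 hu]

theorem eq_inter_setOf_inner_le_of_exposes {P G : Set E} {q : E} {ρ : ℝ} (hGP : G ⊆ P)
    (hG : ∀ u ∈ G, ⟪q, u⟫ = ρ) (hP : ∀ y ∈ P \ G, ρ < ⟪q, y⟫) :
    G = P ∩ {y | ⟪q, y⟫ ≤ ρ} := by
  ext y
  refine ⟨fun hy => ⟨hGP hy, (hG y hy).le⟩, fun ⟨hyP, hyq⟩ => ?_⟩
  by_contra hyG
  exact (hP y ⟨hyP, hyG⟩).not_ge hyq

variable {ι : Type*} {Q : ι → E} {R : ι → ℝ}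

variable (Q R) in
theorem convex_setOf_forall_le_inner :
    Convex ℝ {y : E | ∀ j, R j ≤ ⟪Q j, y⟫} := by
  rw [Set.ofPred_forall]
  exact convex_iInter fun j => convex_halfSpace_ge (innerₗ E (Q j)).isLinear (R j)

theorem Convex.exists_mem_forall_inner_eq_imp [Finite ι] {G : Set E} (hG : Convex ℝ G)
    (hne : G.Nonempty) (hGR : ∀ g ∈ G, ∀ j, R j ≤ ⟪Q j, g⟫) :
    ∃ m ∈ G, ∀ j, ⟪Q j, m⟫ = R j → ∀ g ∈ G, ⟪Q j, g⟫ = R j := by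
  classical
  cases nonempty_fintype ι
  have key : ∀ s : Finset ι, ∃ m ∈ G, ∀ j ∈ s, ∀ g ∈ G, R j < ⟪Q j, g⟫ → R j < ⟪Q j, m⟫ := by
    intro s
    induction s using Finset.induction_on with
    | empty => exact hne.imp fun m hm => ⟨hm, by simp⟩
    | insert i s _ ih =>
      obtain ⟨m, hm, hms⟩ := ih
      by_cases hi : ∃ g ∈ G, R i < ⟪Q i, g⟫
      · obtain ⟨g, hg, hgi⟩ := hi
        -- the midpoint inherits the strict inequalities of both `m` and `g`
        refine ⟨(1 / 2 : ℝ) • m + (1 / 2 : ℝ) • g,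
          hG hm hg (by norm_num) (by norm_num) (by norm_num), ?_⟩
        simp only [Finset.mem_insert, forall_eq_or_imp, inner_add_right, real_inner_smul_right]
        exact ⟨fun _ _ _ => by linarith [hGR m hm i],
          fun j hj g' hg' hlt => by linarith [hms j hj g' hg' hlt, hGR g hg j]⟩
      · push Not at hi
        refine ⟨m, hm, ?_⟩
        simp only [Finset.mem_insert, forall_eq_or_imp]
        exact ⟨fun g hg hlt => absurd (hi g hg) hlt.not_ge, hms⟩
  obtain ⟨m, hm, hstrict⟩ := key Finset.univ
  refine ⟨m, hm, fun j hj g hg => le_antisymm (not_lt.1 fun hlt => ?_) (hGR g hg j)⟩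
  exact (hstrict j (Finset.mem_univ j) g hg hlt).ne' hj

theorem exists_pos_forall_le_inner_add_smul [Finite ι] {y w : E} (hy : ∀ j, R j ≤ ⟪Q j, y⟫)
    (hw : ∀ j, ⟪Q j, y⟫ = R j → 0 ≤ ⟪Q j, w⟫) :
    ∃ ε > (0 : ℝ), ∀ j, R j ≤ ⟪Q j, y + ε • w⟫ := by
  have hev : ∀ᶠ ε in 𝓝[>] (0 : ℝ), ∀ j, R j ≤ ⟪Q j, y⟫ + ε * ⟪Q j, w⟫ := by
    refine eventually_all.2 fun j => ?_
    rcases (hy j).eq_or_lt with hj | hj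
    · filter_upwards [self_mem_nhdsWithin] with ε hε
      nlinarith [hw j hj.symm, Set.mem_Ioi.1 hε]
    · have hlim : Tendsto (fun ε : ℝ => ⟪Q j, y⟫ + ε * ⟪Q j, w⟫) (𝓝[>] 0) (𝓝 ⟪Q j, y⟫) :=
        ((continuous_const.add (continuous_id.mul continuous_const)).tendsto' 0 _
          (by simp)).mono_left nhdsWithin_le_nhds
      exact (hlim.eventually_const_lt hj).mono fun _ => le_of_lt
  obtain ⟨ε, hεR, hε⟩ := (hev.and self_mem_nhdsWithin).exists
  exact ⟨ε, hε, fun j => by simpa [inner_add_right, real_inner_smul_right] using hεR j⟩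

variable (Q R) in
def transverseCone (G : Set E) : Set E :=
  (vectorSpan ℝ G)ᗮ ∩ ⋂ j, ⋂ (_ : ∀ g ∈ G, ⟪Q j, g⟫ = R j), {w | 0 ≤ ⟪Q j, w⟫}

theorem mem_transverseCone {G : Set E} {w : E} :
    w ∈ transverseCone Q R G ↔
      w ∈ (vectorSpan ℝ G)ᗮ ∧ ∀ j, (∀ g ∈ G, ⟪Q j, g⟫ = R j) → 0 ≤ ⟪Q j, w⟫ := by
  simp [transverseCone]

theorem isClosed_transverseCone (G : Set E) : IsClosed (transverseCone Q R G) :=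
  (Submodule.isClosed_orthogonal _).inter <| isClosed_iInter fun _ => isClosed_iInter fun _ =>
    isClosed_le continuous_const (continuous_const.inner continuous_id)

theorem smul_mem_transverseCone {G : Set E} {w : E} (hw : w ∈ transverseCone Q R G) {c : ℝ}
    (hc : 0 ≤ c) : c • w ∈ transverseCone Q R G := by
  rw [mem_transverseCone] at hw ⊢
  exact ⟨Submodule.smul_mem _ c hw.1, fun j hj => by
    rw [real_inner_smul_right]; exact mul_nonneg hc (hw.2 j hj)⟩

theorem orthogonalProjectionOnto_sub_mem_transverseCone {G : Set E}
    [(vectorSpan ℝ G)ᗮ.HasOrthogonalProjection] {x m : E} (hx : ∀ j, R j ≤ ⟪Q j, x⟫)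
    (hm : m ∈ G) :
    ((vectorSpan ℝ G)ᗮ.orthogonalProjectionOnto (x - m) : E) ∈ transverseCone Q R G := by
  refine mem_transverseCone.2 ⟨Submodule.coe_mem _, fun j hj => ?_⟩
  rw [inner_orthogonalProjectionOnto_of_mem (mem_orthogonal_vectorSpan_of_inner_eq hj),
    inner_sub_right, hj m hm]
  linarith [hx j]

theorem inner_pos_of_mem_transverseCone [Finite ι] {G : Set E} {q : E} {ρ : ℝ}
    (hGeq : G = {y | ∀ j, R j ≤ ⟪Q j, y⟫} ∩ {y | ⟪q, y⟫ ≤ ρ}) {m₀ : E} (hm₀G : m₀ ∈ G)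
    (hm₀ : ∀ j, ⟪Q j, m₀⟫ = R j → ∀ g ∈ G, ⟪Q j, g⟫ = R j) {w : E}
    (hw : w ∈ transverseCone Q R G) (hw0 : w ≠ 0) : 0 < ⟪q, w⟫ := by
  by_contra! hqw
  rw [mem_transverseCone] at hw
  obtain ⟨hm₀P, hm₀q⟩ : m₀ ∈ {y | ∀ j, R j ≤ ⟪Q j, y⟫} ∩ {y | ⟪q, y⟫ ≤ ρ} := hGeq ▸ hm₀G
  obtain ⟨ε, hε, hεP⟩ :=
    exists_pos_forall_le_inner_add_smul hm₀P fun j hj => hw.2 j (hm₀ j hj)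
  have hεG : m₀ + ε • w ∈ G := by
    rw [hGeq]
    refine ⟨hεP, ?_⟩
    rw [Set.mem_ofPred_eq, inner_add_right, real_inner_smul_right]
    linarith [show ⟪q, m₀⟫ ≤ ρ from hm₀q, mul_nonpos_of_nonneg_of_nonpos hε.le hqw]
  have hεV : ε • w ∈ vectorSpan ℝ G := by
    simpa using vsub_mem_vectorSpan ℝ hεG hm₀G
  have hεw : ε • w = 0 :=
    Submodule.disjoint_def.1 (vectorSpan ℝ G).orthogonal_disjoint _ hεV
      (Submodule.smul_mem _ ε hw.1)
  exact hw0 ((smul_eq_zero.1 hεw).resolve_left hε.ne')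

end InnerProductSpace

/-- If `G` is a nonempty face of a polyhedron `P` and `q ∈ (G*)°|P`, then there is `r > 0`
such that for all `x ∈ P \ G` and `m ∈ G`, the orthogonal projection `w` of `x - m` onto
`V(G)ᗮ` is nonzero and satisfies `⟨q, w⟩ ≥ r‖w‖`. -/
theorem stmt13 {n : ℕ} (P G : Set (EuclideanSpace ℝ (Fin n)))
    (hP : IsPolyhedron P) (hG : IsFace P G) (hGne : G.Nonempty)
    (q : EuclideanSpace ℝ (Fin n)) (hq : q ∈ coneInterior P G) :
    ∃ r : ℝ, 0 < r ∧ ∀ x ∈ P \ G, ∀ m ∈ G,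
      ((Submodule.orthogonalProjectionOnto (dirSpan G)ᗮ (x - m) : EuclideanSpace ℝ (Fin n)) ≠ 0 ∧
        r * ‖(Submodule.orthogonalProjectionOnto (dirSpan G)ᗮ (x - m) : EuclideanSpace ℝ (Fin n))‖ ≤
          ⟪q, (Submodule.orthogonalProjectionOnto (dirSpan G)ᗮ (x - m) : EuclideanSpace ℝ (Fin n))⟫) := by
  obtain ⟨N, Q, R, rfl⟩ := hP
  obtain ⟨-, ρ, hρG, hρP⟩ := hq
  have hGeq := eq_inter_setOf_inner_le_of_exposes hG.1 hρG hρP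
  have hGconv : Convex ℝ G := by
    rw [hGeq]
    exact (convex_setOf_forall_le_inner Q R).inter
      (convex_halfSpace_le (innerₗ _ q).isLinear ρ)
  obtain ⟨m₀, hm₀G, hm₀⟩ := hGconv.exists_mem_forall_inner_eq_imp hGne fun g hg => hG.1 hg
  obtain ⟨r, hr, hrK⟩ := exists_pos_mul_norm_le_of_pos_on_cone (isClosed_transverseCone G)
    (fun w hw c hc => smul_mem_transverseCone hw hc.le) (innerSL ℝ q)
    fun w hw hw0 => inner_pos_of_mem_transverseCone hGeq hm₀G hm₀ hw hw0
  refine ⟨r, hr, fun x hx m hm => ?_⟩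
  rw [dirSpan_eq_vectorSpan]
  have hwK := orthogonalProjectionOnto_sub_mem_transverseCone hx.1 hm
  have hqw : ⟪q, ((vectorSpan ℝ G)ᗮ.orthogonalProjectionOnto (x - m) : _)⟫ = ⟪q, x - m⟫ :=
    inner_orthogonalProjectionOnto_of_mem (mem_orthogonal_vectorSpan_of_inner_eq hρG) _
  have hqxm : 0 < ⟪q, x - m⟫ := by
    rw [inner_sub_right, hρG m hm]
    linarith [hρP x hx]
  refine ⟨fun h0 => ?_, hrK _ hwK⟩
  rw [h0, inner_zero_right] at hqw
  linarith
end
end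

section
/- Let h: ℝ → ℝ be an odd, bounded, measurable function with compact support. Let Ω ⊆ ℤ₊ⁿ be a finite even set, and let c_m ∈ ℝ for m ∈ Ω. Then ∫_{ℝⁿ} exp( i · ∑_{m ∈ Ω} c_m t^m ) · ∏_{ℓ=1}^{n} h(t_ℓ) dt = 0, where t^m = ∏_{j=1}^{n} t_j^{m_j} for m = (m_1,…,m_n). -/
noncomputable section

open MeasureTheory

/-- A finite set `Ω ⊆ ℤ₊ⁿ` is even if every sum of a subset of `Ω` has at least one even
coordinate. -/
def IsEvenSet {n : ℕ} (Ω : Finset (Fin n → ℕ)) : Prop :=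
  ∀ Ω' ⊆ Ω, ∃ j : Fin n, Even (∑ m ∈ Ω', m j)

private lemma zmod2_cases (a : ZMod 2) : a = 0 ∨ a = 1 := by revert a; decide

private lemma sum_symmdiff {α : Type} [DecidableEq α] {n : ℕ}
    (f : α → (Fin n → ZMod 2)) (A B : Finset α) :
    (∑ a ∈ A, f a) + ∑ a ∈ B, f a = ∑ a ∈ (A \ B) ∪ (B \ A), f a := by
  have hM : ∀ x : Fin n → ZMod 2, x + x = 0 := by
    intro x; funext j; exact CharTwo.add_self_eq_zero (x j)
  have h1 : (A ∪ B) = ((A \ B) ∪ (B \ A)) ∪ (A ∩ B) := by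
    ext x
    simp only [Finset.mem_union, Finset.mem_sdiff, Finset.mem_inter]
    tauto
  have hd : Disjoint ((A \ B) ∪ (B \ A)) (A ∩ B) := by
    rw [Finset.disjoint_left]
    intro x hx hx'
    simp only [Finset.mem_union, Finset.mem_sdiff, Finset.mem_inter] at hx hx'
    tauto
  have key := Finset.sum_union_inter (s₁ := A) (s₂ := B) (f := f)
  rw [h1, Finset.sum_union hd] at key
  rw [← key, add_assoc, hM, add_zero]

private lemma span_subset_sums {n : ℕ} (Ω : Finset (Fin n → ℕ)) (x : Fin n → ZMod 2)
    (hx : x ∈ Submodule.span (ZMod 2)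
      ((fun (m : Fin n → ℕ) (j : Fin n) => ((m j : ℕ) : ZMod 2)) '' (Ω : Set (Fin n → ℕ)))) :
    ∃ Ω' ⊆ Ω, x = ∑ m ∈ Ω', fun j => ((m j : ℕ) : ZMod 2) := by
  classical
  induction hx using Submodule.span_induction with
  | mem y hy =>
    obtain ⟨m, hm, rfl⟩ := hy
    exact ⟨{m}, Finset.singleton_subset_iff.2 hm, by simp⟩
  | zero => exact ⟨∅, by simp, by simp⟩
  | add y z hy hz ihy ihz =>
    obtain ⟨A, hA, rfl⟩ := ihy
    obtain ⟨B, hB, rfl⟩ := ihz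
    refine ⟨(A \ B) ∪ (B \ A), ?_, ?_⟩
    · intro m hm
      simp only [Finset.mem_union, Finset.mem_sdiff] at hm
      rcases hm with ⟨hm, _⟩ | ⟨hm, _⟩
      exacts [hA hm, hB hm]
    · exact sum_symmdiff (fun m j => ((m j : ℕ) : ZMod 2)) A B
  | smul r y hy ihy =>
    obtain ⟨A, hA, rfl⟩ := ihy
    rcases zmod2_cases r with h | h
    · exact ⟨∅, by simp, by simp [h]⟩
    · exact ⟨A, hA, by simp [h]⟩

private lemma exists_sign {n : ℕ} (Ω : Finset (Fin n → ℕ)) (heven : IsEvenSet Ω) :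
    ∃ v : Fin n → ZMod 2,
      (∀ m ∈ Ω, (∑ j, v j * ((m j : ℕ) : ZMod 2)) = 0) ∧ (∑ j, v j) = 1 := by
  classical
  set red : (Fin n → ℕ) → (Fin n → ZMod 2) := fun m j => ((m j : ℕ) : ZMod 2) with hred
  set W : Submodule (ZMod 2) (Fin n → ZMod 2) :=
    Submodule.span (ZMod 2) (red '' (Ω : Set (Fin n → ℕ))) with hW
  have h1 : (1 : Fin n → ZMod 2) ∉ W := by
    intro hmem
    obtain ⟨Ω', hsub, hsum⟩ := span_subset_sums Ω _ hmem
    obtain ⟨j, hj⟩ := heven Ω' hsub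
    have hcast : ((∑ m ∈ Ω', m j : ℕ) : ZMod 2) = 1 := by
      push_cast
      have := congrFun hsum j
      simpa using this.symm
    rw [even_iff_two_dvd, ← ZMod.natCast_eq_zero_iff] at hj
    rw [hcast] at hj
    exact one_ne_zero hj
  have h2 : (Submodule.Quotient.mk (p := W) (1 : Fin n → ZMod 2)) ≠ 0 := by
    simpa [Submodule.Quotient.mk_eq_zero] using h1
  have h3 : ¬ ∀ φ : Module.Dual (ZMod 2) ((Fin n → ZMod 2) ⧸ W),
      φ (Submodule.Quotient.mk (1 : Fin n → ZMod 2)) = 0 := by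
    rw [Module.forall_dual_apply_eq_zero_iff]
    exact h2
  push_neg at h3
  obtain ⟨ψ, hψ⟩ := h3
  set φ : (Fin n → ZMod 2) →ₗ[ZMod 2] ZMod 2 := ψ.comp W.mkQ with hφ
  set v : Fin n → ZMod 2 := fun j => φ (fun k => if j = k then 1 else 0) with hv
  have happ : ∀ x, φ x = ∑ j, x j * v j := by
    intro x
    rw [LinearMap.pi_apply_eq_sum_univ φ x]
    simp [hv, smul_eq_mul]
  refine ⟨v, ?_, ?_⟩
  · intro m hm
    have hmW : red m ∈ W := Submodule.subset_span ⟨m, hm, rfl⟩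
    have h0 : φ (red m) = 0 := by
      rw [hφ, LinearMap.comp_apply]
      have : W.mkQ (red m) = 0 := (Submodule.Quotient.mk_eq_zero W).2 hmW
      rw [this, map_zero]
    rw [happ] at h0
    rw [← h0]
    exact Finset.sum_congr rfl fun j _ => by rw [mul_comm]
  · have hne : φ 1 ≠ 0 := hψ
    rw [happ] at hne
    simp only [Pi.one_apply, one_mul] at hne
    rcases zmod2_cases (∑ j, v j) with h | h
    · exact absurd h hne
    · exact h

/-- Vanishing property: if `h : ℝ → ℝ` is odd, bounded, measurable and compactly
supported, and `Ω ⊆ ℤ₊ⁿ` is a finite even set, then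
`∫_{ℝⁿ} exp(i ∑_{m ∈ Ω} c_m t^m) ∏_ℓ h(t_ℓ) dt = 0`. -/
theorem stmt16 {n : ℕ} (h : ℝ → ℝ)
    (hodd : ∀ x, h (-x) = - h x)
    (hbdd : ∃ C : ℝ, ∀ x, |h x| ≤ C)
    (hmeas : Measurable h)
    (hsupp : HasCompactSupport h)
    (Ω : Finset (Fin n → ℕ)) (heven : IsEvenSet Ω)
    (c : (Fin n → ℕ) → ℝ) :
    ∫ t : Fin n → ℝ,
        Complex.exp (Complex.I * ∑ m ∈ Ω, (c m : ℂ) * ∏ j, (t j : ℂ) ^ (m j)) *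
          ∏ ℓ, (h (t ℓ) : ℂ) = 0 := by
  classical
  obtain ⟨v, hv0, hv1⟩ := exists_sign Ω heven
  set ε : Fin n → ℝ := fun j => (-1 : ℝ) ^ (v j).val with hε
  have hεcases : ∀ j, ε j = 1 ∨ ε j = -1 := by
    intro j
    rcases zmod2_cases (v j) with hj | hj
    · left
      rw [hε]; simp only [hj]
      norm_num [ZMod.val_zero]
    · right
      rw [hε]; simp only [hj]
      norm_num [ZMod.val_one]
  have hε2 : ∀ j, ε j * ε j = 1 := by
    intro j; rcases hεcases j with hj | hj <;> rw [hj] <;> norm_num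
  set T : (Fin n → ℝ) → (Fin n → ℝ) := fun t j => ε j * t j with hT
  set F : (Fin n → ℝ) → ℂ := fun t =>
    Complex.exp (Complex.I * ∑ m ∈ Ω, (c m : ℂ) * ∏ j, (t j : ℂ) ^ (m j)) *
      ∏ ℓ, (h (t ℓ) : ℂ) with hF
  -- T is measure preserving
  have hmp : MeasurePreserving T volume volume := by
    apply volume_preserving_pi
    intro j
    rcases hεcases j with hj | hj
    · rw [hj]
      have h1 : (HMul.hMul (1 : ℝ) : ℝ → ℝ) = id := by funext x; simp
      rw [h1]
      exact MeasurePreserving.id _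
    · rw [hj]
      have h1 : (HMul.hMul (-1 : ℝ) : ℝ → ℝ) = Neg.neg := by funext x; simp
      rw [h1]
      exact Measure.measurePreserving_neg _
  -- T is an involutive measurable equiv
  have hinv : Function.Involutive T := by
    intro t; funext j
    simp only [hT, ← mul_assoc, hε2 j, one_mul]
  set e : MeasurableEquiv (Fin n → ℝ) (Fin n → ℝ) :=
    { toEquiv := hinv.toPerm T
      measurable_toFun := hmp.measurable
      measurable_invFun := hmp.measurable } with he
  have hemb : MeasurableEmbedding T := e.measurableEmbedding
  -- pointwise identity : F (T t) = - F t
  have hpoint : ∀ t, F (T t) = - F t := by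
    intro t
    have hphase : ∀ m ∈ Ω, (∏ j, ((ε j * t j : ℝ) : ℂ) ^ (m j)) =
        ∏ j, (t j : ℂ) ^ (m j) := by
      intro m hm
      have hterm : ∀ j, ((ε j * t j : ℝ) : ℂ) ^ (m j) =
          ((-1 : ℂ) ^ ((v j).val * m j)) * (t j : ℂ) ^ (m j) := by
        intro j
        push_cast
        rw [mul_pow, hε, pow_mul]
        push_cast
        ring
      rw [Finset.prod_congr rfl fun j _ => hterm j, Finset.prod_mul_distrib,
        Finset.prod_pow_eq_pow_sum]
      have heven' : Even (∑ j, (v j).val * m j) := by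
        rw [even_iff_two_dvd, ← ZMod.natCast_eq_zero_iff]
        push_cast
        rw [← hv0 m hm]
        exact Finset.sum_congr rfl fun j _ => by
          rw [ZMod.natCast_val, ZMod.cast_id]
      rw [heven'.neg_one_pow, one_mul]
    have hhsign : ∀ ℓ x, h (ε ℓ * x) = ε ℓ * h x := by
      intro ℓ x
      rcases hεcases ℓ with hj | hj
      · rw [hj, one_mul, one_mul]
      · rw [hj, neg_one_mul, neg_one_mul, hodd]
    have hprod : (∏ ℓ, (h (ε ℓ * t ℓ) : ℂ)) = - ∏ ℓ, (h (t ℓ) : ℂ) := by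
      have hterm : ∀ ℓ, (h (ε ℓ * t ℓ) : ℂ) = (ε ℓ : ℂ) * (h (t ℓ) : ℂ) := by
        intro ℓ; rw [hhsign]; push_cast; ring
      rw [Finset.prod_congr rfl fun ℓ _ => hterm ℓ, Finset.prod_mul_distrib]
      have hεprod : (∏ ℓ, (ε ℓ : ℂ)) = -1 := by
        have hterm2 : ∀ ℓ : Fin n, (ε ℓ : ℂ) = (-1 : ℂ) ^ (v ℓ).val := by
          intro ℓ; rw [hε]; push_cast; ring
        rw [Finset.prod_congr rfl fun ℓ _ => hterm2 ℓ, Finset.prod_pow_eq_pow_sum]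
        have hodd' : ¬ Even (∑ j, (v j).val) := by
          rw [even_iff_two_dvd, ← ZMod.natCast_eq_zero_iff]
          push_cast
          have hc : (∑ j, (((v j).val : ℕ) : ZMod 2)) = ∑ j, v j :=
            Finset.sum_congr rfl fun j _ => by rw [ZMod.natCast_val, ZMod.cast_id]
          rw [hc, hv1]
          exact one_ne_zero
        rw [(Nat.not_even_iff_odd.1 hodd').neg_one_pow]
      rw [hεprod, neg_one_mul]
    simp only [hF, hT]
    have e1 : (∑ m ∈ Ω, (c m : ℂ) * ∏ j, ((ε j * t j : ℝ) : ℂ) ^ (m j)) =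
        ∑ m ∈ Ω, (c m : ℂ) * ∏ j, (t j : ℂ) ^ (m j) :=
      Finset.sum_congr rfl fun m hm => by rw [hphase m hm]
    rw [e1, hprod]
    ring
  -- conclude
  have key : (∫ t, F t) = ∫ t, F (T t) := (hmp.integral_comp hemb F).symm
  have key2 : (∫ t, F (T t)) = - ∫ t, F t := by
    simp_rw [hpoint]
    exact integral_neg F
  have hI : (∫ t, F t) = - ∫ t, F t := key.trans key2
  have hI0 : (∫ t, F t) = 0 := by linear_combination (1/2 : ℂ) * hI
  simpa [hF] using hI0
end
end
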